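/- Let Π be a HEF CNF theory, M a model of Π, and S the steady set of M for Π. If E ⊆ atom of the simplified theory (simpl(Π,M))_{M\S} is super-elementary for that simplified theory (elementary and non-outbound in its atom set), then E is erasable in M for Π, i.e., M \ E is a model of Π. -/

import Mathlib

structure Clause where
  head : Finset ℕ
  body : Finset ℕ
deriving DecidableEq

abbrev Theory := Finset Clause

/-- interpretation I satisfies clause c -/
def satC (I : Finset ℕ) (c : Clause) : Prop :=
  (c.head ∩ I).Nonempty ∨ ¬ c.body ⊆ I

def isModel (T : Theory) (I : Finset ℕ) : Prop := ∀ c ∈ T, satC I c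

def isMinModel (T : Theory) (I : Finset ℕ) : Prop :=
  isModel T I ∧ ∀ J ⊂ I, ¬ isModel T J

def Positive (T : Theory) : Prop := ∀ c ∈ T, c.head.Nonempty

def Horn (T : Theory) : Prop := ∀ c ∈ T, c.head.card = 1

/-- atoms occurring in a theory -/
def atoms (T : Theory) : Finset ℕ := T.biUnion (fun c => c.head ∪ c.body)

/-- c_{X←} : project head on X -/
def projHeadC (c : Clause) (X : Finset ℕ) : Clause := ⟨c.head ∩ X, c.body⟩
/-- c_X : project head and body on X -/
def projC (c : Clause) (X : Finset ℕ) : Clause := ⟨c.head ∩ X, c.body ∩ X⟩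

/-- Π_{X←} -/
def projHeadT (T : Theory) (X : Finset ℕ) : Theory :=
  (T.image (fun c => projHeadC c X)).filter (fun c => c.head.Nonempty)

/-- Π_X -/
def projT (T : Theory) (X : Finset ℕ) : Theory :=
  (T.image (fun c => projC c X)).filter (fun c => c.head.Nonempty)

/-- Π^{nd} : single-head fragment -/
def nd (T : Theory) : Theory := T.filter (fun c => c.head.card = 1)

/-- the steady set of M for Π is the minimal model of Π^{nd}_{M←} -/
def isSteady (T : Theory) (M S : Finset ℕ) : Prop :=
  isMinModel (nd (projHeadT T M)) S

def simpl (T : Theory) (M S : Finset ℕ) : Theory :=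
  T.filter (fun c => c.head ∩ S = ∅ ∧ c.body ⊆ M)

/-- simplified theory of Π w.r.t. M (with steady set S) -/
def simplT (T : Theory) (M S : Finset ℕ) : Theory := projT (simpl T M S) (M \ S)

/-- E erasable in M for T -/
def Erasable (T : Theory) (M E : Finset ℕ) : Prop :=
  E.Nonempty ∧ E ⊆ M ∧ isModel T (M \ E)

def Outbound (T : Theory) (Y Z : Finset ℕ) : Prop :=
  ∃ c ∈ T, (c.head ∩ Z).Nonempty ∧ (c.body ∩ (Y \ Z)).Nonempty ∧
    c.body ∩ Z = ∅ ∧ c.head ∩ (Y \ Z) = ∅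

def Elementary (T : Theory) (Y : Finset ℕ) : Prop :=
  Y.Nonempty ∧ Y ⊆ atoms T ∧ ∀ Z, Z ⊂ Y → Z.Nonempty → Outbound T Y Z

def HEF (T : Theory) : Prop :=
  ∀ c ∈ T, ∀ E, Elementary T E → (E ∩ c.head).card ≤ 1

def DisjunctiveSet (T : Theory) (S : Finset ℕ) : Prop :=
  ∃ c ∈ T, 1 < (c.head ∩ S).card

def SuperElementary (T : Theory) (X : Finset ℕ) : Prop :=
  Elementary T X ∧ ¬ Outbound T (atoms T) X

def posForm (T : Theory) (phi : ℕ) : Theory :=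
  T.filter (fun c => c.head.Nonempty) ∪
  (T.filter (fun c => c.head = ∅)).image (fun c => ⟨{phi}, c.body⟩) ∪
  (atoms T).image (fun a => ⟨{a}, {phi}⟩)

/-!
Suppose a clause `c` of `Π` with `c.body ⊆ M` is falsified by `M \ E`, so that
`∅ ≠ c.head ∩ M ⊆ E`. The steady set lies in `M` and `E` avoids it, so `c.head` avoids `S` and
`c` survives simplification. Its projection to `M \ S` has its head inside `E` and its body
outside `E`; as `E` is not outbound in the atoms of the simplified theory, that body is empty,
i.e. `c.body ⊆ S`. Elementarity lifts from the simplified theory to `Π`, so HEF makes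
`c.head ∩ M` a singleton, and `c` contributes the single-head clause `c.head ∩ M ← c.body` to
`Π^{nd}_{M←}`. The steady set satisfies it, so `c.head` meets `S` after all.
-/

open Finset

theorem Outbound.mono {T T' : Theory} {Y Z : Finset ℕ} (hT : T ⊆ T') (h : Outbound T Y Z) :
    Outbound T' Y Z := by
  obtain ⟨c, hc, hcZ⟩ := h
  exact ⟨c, hT hc, hcZ⟩

theorem atoms_mono {T T' : Theory} (hT : T ⊆ T') : atoms T ⊆ atoms T' :=
  biUnion_subset_biUnion_of_subset_left _ hT

theorem Elementary.mono {T T' : Theory} {Y : Finset ℕ} (hT : T ⊆ T') (h : Elementary T Y) :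
    Elementary T' Y :=
  ⟨h.1, h.2.1.trans (atoms_mono hT), fun Z hZ hZne => (h.2.2 Z hZ hZne).mono hT⟩

theorem atoms_projT_subset (T : Theory) (X : Finset ℕ) : atoms (projT T X) ⊆ atoms T := by
  intro a ha
  simp only [atoms, projT, mem_biUnion, mem_filter, mem_image] at ha ⊢
  obtain ⟨_, ⟨⟨c, hc, rfl⟩, _⟩, ha⟩ := ha
  refine ⟨c, hc, ?_⟩
  simp only [projC, mem_union, mem_inter] at ha ⊢
  tauto

theorem atoms_projT_subset_right (T : Theory) (X : Finset ℕ) : atoms (projT T X) ⊆ X := by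
  intro a ha
  simp only [atoms, projT, mem_biUnion, mem_filter, mem_image] at ha
  obtain ⟨_, ⟨⟨c, _, rfl⟩, _⟩, ha⟩ := ha
  simp only [projC, mem_union, mem_inter] at ha
  tauto

theorem Outbound.of_projT {T : Theory} {X Y Z : Finset ℕ} (hY : Y ⊆ X) (hZ : Z ⊆ Y)
    (h : Outbound (projT T X) Y Z) : Outbound T Y Z := by
  obtain ⟨_, hd, hout⟩ := h
  simp only [projT, mem_filter, mem_image] at hd
  obtain ⟨⟨c, hc, rfl⟩, _⟩ := hd
  simp only [projC, inter_assoc, inter_eq_right.mpr (hZ.trans hY),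
    inter_eq_right.mpr (sdiff_subset.trans hY)] at hout
  exact ⟨c, hc, hout⟩

theorem Elementary.of_projT {T : Theory} {X Y : Finset ℕ} (h : Elementary (projT T X) Y) :
    Elementary T Y := by
  have hYX : Y ⊆ X := h.2.1.trans (atoms_projT_subset_right T X)
  exact ⟨h.1, h.2.1.trans (atoms_projT_subset T X),
    fun Z hZ hZne => (h.2.2 Z hZ hZne).of_projT hYX hZ.subset⟩

theorem projC_mem_projT {T : Theory} {X : Finset ℕ} {c : Clause} (hc : c ∈ T)
    (hne : (c.head ∩ X).Nonempty) : projC c X ∈ projT T X :=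
  mem_filter.mpr ⟨mem_image_of_mem _ hc, hne⟩

theorem body_eq_empty_of_not_outbound {T : Theory} {E : Finset ℕ} {d : Clause}
    (hE : ¬ Outbound T (atoms T) E) (hd : d ∈ T) (hne : d.head.Nonempty) (hhead : d.head ⊆ E)
    (hbody : Disjoint d.body E) : d.body = ∅ := by
  have hatoms : d.head ∪ d.body ⊆ atoms T :=
    subset_biUnion_of_mem (fun c : Clause => c.head ∪ c.body) hd
  by_contra hbne
  obtain ⟨x, hx⟩ := nonempty_iff_ne_empty.mpr hbne
  refine hE ⟨d, hd, ?_, ⟨x, ?_⟩, ?_, ?_⟩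
  · rwa [inter_eq_left.mpr hhead]
  · exact mem_inter.mpr ⟨hx, mem_sdiff.mpr ⟨hatoms (mem_union_right _ hx),
      disjoint_left.mp hbody hx⟩⟩
  · exact disjoint_iff_inter_eq_empty.mp hbody
  · exact disjoint_iff_inter_eq_empty.mp (disjoint_sdiff.mono_left hhead)

theorem head_subset_of_mem_projHeadT {T : Theory} {X : Finset ℕ} {d : Clause}
    (hd : d ∈ projHeadT T X) : d.head ⊆ X := by
  simp only [projHeadT, mem_filter, mem_image] at hd
  obtain ⟨⟨c, _, rfl⟩, _⟩ := hd
  exact inter_subset_right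

theorem isModel.inter_of_head_subset {T : Theory} {I X : Finset ℕ}
    (hX : ∀ d ∈ T, d.head ⊆ X) (hI : isModel T I) : isModel T (I ∩ X) := by
  intro d hd
  rcases hI d hd with ⟨a, ha⟩ | hbody
  · obtain ⟨haHead, haI⟩ := mem_inter.mp ha
    exact Or.inl ⟨a, mem_inter.mpr ⟨haHead, mem_inter.mpr ⟨haI, hX d hd haHead⟩⟩⟩
  · exact Or.inr fun h => hbody (h.trans inter_subset_left)

theorem isSteady.subset {T : Theory} {M S : Finset ℕ} (hS : isSteady T M S) : S ⊆ M := by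
  have hmodel : isModel (nd (projHeadT T M)) (S ∩ M) :=
    hS.1.inter_of_head_subset fun d hd => head_subset_of_mem_projHeadT (mem_filter.mp hd).1
  by_contra hSM
  exact hS.2 _ (inter_subset_left.ssubset_of_ne fun h => hSM (h ▸ inter_subset_right)) hmodel

theorem body_subset_of_not_outbound_simplT {T : Theory} {M S E : Finset ℕ} {c : Clause}
    (hE : ¬ Outbound (simplT T M S) (atoms (simplT T M S)) E) (hc : c ∈ T)
    (hheadS : c.head ∩ S = ∅) (hbodyM : c.body ⊆ M) (hheadM : (c.head ∩ M).Nonempty)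
    (hheadE : c.head ∩ M ⊆ E) (hbodyE : Disjoint c.body E) : c.body ⊆ S := by
  have hproj : c.head ∩ (M \ S) = c.head ∩ M := by
    rw [← inter_sdiff_assoc, sdiff_eq_self_of_disjoint
      (disjoint_iff_inter_eq_empty.mpr (by rw [inter_right_comm, hheadS, empty_inter]))]
  have hmem : projC c (M \ S) ∈ simplT T M S :=
    projC_mem_projT (mem_filter.mpr ⟨hc, hheadS, hbodyM⟩) (hproj ▸ hheadM)
  have hfact : c.body ∩ (M \ S) = ∅ :=
    body_eq_empty_of_not_outbound hE hmem (by rwa [projC, hproj]) (by rwa [projC, hproj])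
      (hbodyE.mono_left inter_subset_left)
  intro x hx
  by_contra hxS
  simpa [hfact] using mem_inter.mpr ⟨hx, mem_sdiff.mpr ⟨hbodyM hx, hxS⟩⟩

theorem isSteady.inter_head_nonempty {T : Theory} {M S : Finset ℕ} {c : Clause}
    (hS : isSteady T M S) (hc : c ∈ T) (hcard : (c.head ∩ M).card = 1) (hbody : c.body ⊆ S) :
    (c.head ∩ S).Nonempty := by
  have hsat : satC S (projHeadC c M) := hS.1 _ <| mem_filter.mpr
    ⟨mem_filter.mpr ⟨mem_image_of_mem _ hc, card_pos.mp (hcard ▸ Nat.one_pos)⟩, hcard⟩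
  exact (hsat.resolve_right (not_not.mpr hbody)).mono (inter_subset_inter_right inter_subset_left)

theorem stmt13_general (T : Theory) (M S E : Finset ℕ) (hHEF : HEF T) (hM : isModel T M)
    (hS : isSteady T M S) (hse : SuperElementary (simplT T M S) E) :
    isModel T (M \ E) := by
  have hEMS : E ⊆ M \ S := hse.1.2.1.trans (atoms_projT_subset_right _ _)
  have hElem : Elementary T E := hse.1.of_projT.mono (filter_subset _ _)
  intro c hc
  by_contra hsat
  simp only [satC, not_or, not_nonempty_iff_eq_empty, not_not] at hsat
  obtain ⟨hheadME, hbodyME⟩ := hsat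
  have hbodyM : c.body ⊆ M := hbodyME.trans sdiff_subset
  have hheadM : (c.head ∩ M).Nonempty := (hM c hc).resolve_right (not_not.mpr hbodyM)
  have hheadE : c.head ∩ M ⊆ E :=
    sdiff_eq_empty_iff_subset.mp ((inter_sdiff_assoc _ _ _).trans hheadME)
  have hheadS : c.head ∩ S = ∅ := by
    have hsub : c.head ∩ S ⊆ E ∩ S :=
      subset_inter ((inter_subset_inter_left hS.subset).trans hheadE) inter_subset_right
    exact subset_empty.mp
      (hsub.trans (disjoint_iff_inter_eq_empty.mp (subset_sdiff.mp hEMS).2).subset)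
  have hbodyS : c.body ⊆ S := body_subset_of_not_outbound_simplT hse.2 hc hheadS hbodyM hheadM
    hheadE (subset_sdiff.mp hbodyME).2
  have hcard : (c.head ∩ M).card = 1 :=
    le_antisymm ((card_le_card fun a ha => mem_inter.mpr ⟨hheadE ha, (mem_inter.mp ha).1⟩).trans
      (hHEF c hc E hElem)) hheadM.card_pos
  exact (hS.inter_head_nonempty hc hcard hbodyS).ne_empty hheadS

theorem stmt13 (T : Theory) (M S E : Finset ℕ) (hHEF : HEF T) (hM : isModel T M)
    (hS : isSteady T M S) (hSM : S ⊆ M)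
    (hE : E ⊆ atoms (simplT T M S)) (hse : SuperElementary (simplT T M S) E) :
    isModel T (M \ E) :=
  stmt13_general T M S E hHEF hM hS hse
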